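/- Garland's estimate: Let X be a pure k-dimensional complex such that for every (k−2)-face F, all nontrivial eigenvalues of the normalized Laplacian of the link graph lk(F,X) lie in [λ_min, λ_max] (i.e., λ_min ≤ λ₂ ≤ … ≤ λ_{n−k+1} ≤ λ_max). Then for every f in the degree-weighted orthogonal complement of B^{k−1}(X;R), (1 + kλ_min − k)⟨f,f⟩ ≤ ⟨Δ^up_{k−1} f, f⟩ ≤ (1 + kλ_max − k)⟨f,f⟩. In particular all nontrivial eigenvalues of Δ^up_{k−1}(X) lie in [1 + kλ_min − k, 1 + kλ_max − k]. -/

import Mathlib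

/-- Signed incidence number `[F : G]`. -/
def incSign {n : ℕ} (F G : Finset (Fin n)) : ℤ :=
  if G ⊆ F ∧ F.card = G.card + 1 then
    ∑ v ∈ F \ G, (-1 : ℤ) ^ (G.filter (fun x => x < v)).card
  else 0

/-- The `(k−1)`-faces of a pure `k`-dimensional complex with set `K` of `k`-faces. -/
abbrev Faces (n k : ℕ) (K : Finset (Finset (Fin n))) :=
  {G : Finset (Fin n) // G.card = k ∧ ∃ H ∈ K, G ⊆ H}

/-- The vertices of the link of a `(k−2)`-face `F`. -/
abbrev LinkVerts (n : ℕ) (K : Finset (Finset (Fin n))) (F : Finset (Fin n)) :=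
  {u : Fin n // u ∉ F ∧ ∃ H ∈ K, insert u F ⊆ H}

/-!
Garland's method. Localize `f` to the link of each `(k-2)`-face `F` by
`f_F(u) = [F ∪ u : F] f(F ∪ u)`. Orthogonality of `f` to `B^{k-1}` says exactly that each `f_F` is
orthogonal to the constants, so the spectral hypothesis on the link bounds
`‖f_F‖² - ⟨A_F f_F, f_F⟩` by `λ_min ‖f_F‖²` and `λ_max ‖f_F‖²`. Summing over `F`: every
`(k-1)`-face contains `k` faces `F`, so `∑ ‖f_F‖² = k ‖f‖²`; two distinct `(k-1)`-faces with union
in `X` meet in exactly one `F`, and the incidence signs agree, so `∑ ⟨A_F f_F, f_F⟩ = ⟨A f, f⟩`.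
Since `⟨Δ f, f⟩ = ‖f‖² - ⟨A f, f⟩`, this gives the claim.
-/

open Finset
open scoped Matrix

lemma quadForm_one_sub_diagonal_inv_mul {ι : Type*} [Fintype ι] [DecidableEq ι]
    (d : ι → ℝ) (hd : ∀ i, d i ≠ 0) (B : Matrix ι ι ℝ) (x : ι → ℝ) :
    ∑ i, d i * ((1 - Matrix.diagonal (fun i => (d i)⁻¹) * B) *ᵥ x) i * x i
      = ∑ i, d i * x i ^ 2 - ∑ i, ∑ j, B i j * x j * x i := by
  rw [← sum_sub_distrib]
  refine sum_congr rfl fun i _ => ?_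
  rw [Matrix.sub_mulVec, Matrix.one_mulVec, ← Matrix.mulVec_mulVec, Pi.sub_apply,
    Matrix.mulVec_diagonal, Matrix.mulVec, dotProduct, ← sum_mul]
  field_simp [hd i]

lemma filter_subset_powersetCard_univ {α : Type*} [Fintype α] [DecidableEq α] (m : ℕ)
    (G : Finset α) :
    (powersetCard m univ).filter (· ⊆ G) = powersetCard m G := by
  ext F
  simp [mem_powersetCard, and_comm]

lemma incSign_eq_zero_of_not_subset {n : ℕ} {G F : Finset (Fin n)} (h : ¬ F ⊆ G) :
    incSign G F = 0 := by
  rw [incSign, if_neg fun hc => h hc.1]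

lemma incSign_insert_sq {n : ℕ} {F : Finset (Fin n)} {u : Fin n} (hu : u ∉ F) :
    ((incSign (insert u F) F : ℤ) : ℝ) ^ 2 = 1 := by
  rw [incSign, if_pos ⟨subset_insert _ _, card_insert_of_notMem hu⟩,
    insert_sdiff_of_notMem _ hu, sdiff_self, bot_eq_empty, insert_empty, sum_singleton]
  push_cast
  rw [sq, ← mul_pow, neg_one_mul, neg_neg, one_pow]

lemma choose_sub_one_self {k : ℕ} (hk : 1 ≤ k) : k.choose (k - 1) = k := by
  obtain ⟨m, rfl⟩ := Nat.exists_eq_add_of_le' hk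
  exact Nat.choose_succ_self_right m

lemma card_inter_lt_of_ne {α : Type*} [DecidableEq α] {k : ℕ} {G G' : Finset α}
    (hG : G.card = k) (hG' : G'.card = k) (hne : G ≠ G') : (G ∩ G').card < k := by
  by_contra! h
  have h₁ : G ∩ G' = G := eq_of_subset_of_card_le inter_subset_left (hG ▸ h)
  have h₂ : G ∩ G' = G' := eq_of_subset_of_card_le inter_subset_right (hG' ▸ h)
  exact hne (h₁.symm.trans h₂)

section Garland

variable {n k : ℕ} {K : Finset (Finset (Fin n))}

variable (n k K) in
def upAdj : Matrix (Faces n k K) (Faces n k K) ℝ :=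
  Matrix.of fun G G' => if G.1 ≠ G'.1 ∧ (G.1 ∩ G'.1).card = k - 1 ∧ G.1 ∪ G'.1 ∈ K
    then ((incSign G.1 (G.1 ∩ G'.1) * incSign G'.1 (G.1 ∩ G'.1) : ℤ) : ℝ) else 0

variable (n K) in
def linkAdj (F : Finset (Fin n)) : Matrix (LinkVerts n K F) (LinkVerts n K F) ℝ :=
  Matrix.of fun u v => if u ≠ v ∧ insert u.1 (insert v.1 F) ∈ K then 1 else 0

/-- `f_F`, with `f` extended by zero to all finsets so that no proof that `F ∪ u` is a face is
needed. -/
noncomputable def linkCochain (f : Faces n k K → ℝ) (F : Finset (Fin n)) (u : LinkVerts n K F) :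
    ℝ :=
  incSign (insert u.1 F) F * Function.extend Subtype.val f 0 (insert u.1 F)

lemma sum_linkVerts_eq_sum_faces (hk : 1 ≤ k) {F : Finset (Fin n)} (hF : F.card = k - 1)
    (φ : Finset (Fin n) → ℝ) :
    ∑ u : LinkVerts n K F, φ (insert u.1 F) = ∑ G : Faces n k K, if F ⊆ G.1 then φ G.1 else 0 := by
  have hcard : ∀ {u}, u ∉ F → (insert u F).card = k := fun hu => by
    rw [card_insert_of_notMem hu, hF]; omega
  rw [← sum_filter]
  refine sum_bij (fun u _ => ⟨insert u.1 F, hcard u.2.1, u.2.2⟩) (fun u _ => ?_)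
    (fun u _ v _ huv => ?_) (fun G hG => ?_) (fun _ _ => rfl)
  · simp
  · have hv : v.1 ∈ insert u.1 F := by
      rw [show insert u.1 F = insert v.1 F from congrArg Subtype.val huv]
      exact mem_insert_self v.1 F
    exact Subtype.ext ((mem_insert.mp hv).resolve_right v.2.1).symm
  · obtain ⟨-, hFG⟩ := mem_filter.mp hG
    obtain ⟨u, hu⟩ : (G.1 \ F).Nonempty := by
      rw [← card_pos, card_sdiff_of_subset hFG, G.2.1, hF]; omega
    have huF : u ∉ F := (mem_sdiff.mp hu).2
    have hG : insert u F = G.1 :=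
      eq_of_subset_of_card_le (insert_subset (mem_sdiff.mp hu).1 hFG) (by rw [hcard huF, G.2.1])
    exact ⟨⟨u, huF, hG ▸ G.2.2⟩, mem_univ _, Subtype.ext hG⟩

lemma sum_mul_linkCochain (hk : 1 ≤ k) {F : Finset (Fin n)} (hF : F.card = k - 1)
    (d : Finset (Fin n) → ℝ) (f : Faces n k K → ℝ) :
    ∑ u, d (insert u.1 F) * linkCochain f F u = ∑ G : Faces n k K, d G.1 * f G * incSign G.1 F := by
  refine (sum_linkVerts_eq_sum_faces hk hF fun G =>
    d G * (incSign G F * Function.extend Subtype.val f 0 G)).trans (sum_congr rfl fun G _ => ?_)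
  split_ifs with hFG
  · rw [Subtype.val_injective.extend_apply]
    ring
  · rw [incSign_eq_zero_of_not_subset hFG]
    simp

lemma sum_sum_mul_linkCochain_sq (hk : 1 ≤ k) (d : Finset (Fin n) → ℝ)
    (f : Faces n k K → ℝ) :
    ∑ F ∈ powersetCard (k - 1) univ, ∑ u, d (insert u.1 F) * linkCochain f F u ^ 2
      = k * ∑ G : Faces n k K, d G.1 * f G ^ 2 := by
  have hlink : ∀ F ∈ powersetCard (k - 1) univ, ∑ u, d (insert u.1 F) * linkCochain f F u ^ 2
      = ∑ G : Faces n k K, if F ⊆ G.1 then d G.1 * f G ^ 2 else 0 := fun F hF => by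
    refine (sum_congr rfl fun u _ => ?_).trans ((sum_linkVerts_eq_sum_faces hk
      (mem_powersetCard.mp hF).2 fun G => d G * Function.extend Subtype.val f 0 G ^ 2).trans
        (sum_congr rfl fun G _ => by rw [Subtype.val_injective.extend_apply]))
    rw [linkCochain, mul_pow, incSign_insert_sq u.2.1, one_mul]
  rw [sum_congr rfl hlink, sum_comm, mul_sum]
  refine sum_congr rfl fun G _ => ?_
  rw [← sum_filter, filter_subset_powersetCard_univ, sum_const, card_powersetCard, G.2.1,
    choose_sub_one_self hk, nsmul_eq_mul]

lemma sum_linkAdj_linkCochain (hk : 1 ≤ k) {F : Finset (Fin n)} (hF : F.card = k - 1)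
    (f : Faces n k K → ℝ) :
    ∑ u, ∑ v, linkAdj n K F u v * linkCochain f F v * linkCochain f F u
      = ∑ G : Faces n k K, ∑ G' : Faces n k K, if F ⊆ G.1 ∩ G'.1 then
          (if G.1 ≠ G'.1 ∧ G.1 ∪ G'.1 ∈ K then
            ((incSign G.1 F * incSign G'.1 F : ℤ) : ℝ) * f G' * f G else 0) else 0 := by
  set e := Function.extend Subtype.val f 0
  set c : Finset (Fin n) → Finset (Fin n) → ℝ := fun G G' =>
    if G ≠ G' ∧ G ∪ G' ∈ K then ((incSign G F * incSign G' F : ℤ) : ℝ) * e G' * e G else 0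
  calc ∑ u, ∑ v, linkAdj n K F u v * linkCochain f F v * linkCochain f F u
      = ∑ u : LinkVerts n K F, ∑ v : LinkVerts n K F, c (insert u.1 F) (insert v.1 F) := by
        refine sum_congr rfl fun u _ => sum_congr rfl fun v _ => ?_
        have hcond : (u ≠ v ∧ insert u.1 (insert v.1 F) ∈ K) ↔
            (insert u.1 F ≠ insert v.1 F ∧ insert u.1 F ∪ insert v.1 F ∈ K) := by
          rw [Ne, Ne, insert_inj u.2.1, Subtype.ext_iff, insert_union, union_insert, union_self]
        simp only [linkAdj, Matrix.of_apply, linkCochain, c, if_congr hcond rfl rfl]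
        split_ifs
        · push_cast
          ring
        · simp
    _ = ∑ u : LinkVerts n K F, ∑ G' : Faces n k K,
          if F ⊆ G'.1 then c (insert u.1 F) G'.1 else 0 :=
        sum_congr rfl fun u _ => sum_linkVerts_eq_sum_faces hk hF _
    _ = ∑ G : Faces n k K, if F ⊆ G.1 then
          ∑ G' : Faces n k K, (if F ⊆ G'.1 then c G.1 G'.1 else 0) else 0 :=
        sum_linkVerts_eq_sum_faces hk hF fun G =>
          ∑ G' : Faces n k K, if F ⊆ G'.1 then c G G'.1 else 0
    _ = _ := by
        refine sum_congr rfl fun G _ => ?_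
        split_ifs with hG
        · refine sum_congr rfl fun G' _ => ?_
          simp only [c, e, subset_inter_iff, hG, true_and, Subtype.val_injective.extend_apply]
        · exact (sum_eq_zero fun G' _ => if_neg fun h => hG (h.trans inter_subset_left)).symm

lemma sum_sum_linkAdj_linkCochain (hk : 1 ≤ k) (f : Faces n k K → ℝ) :
    ∑ F ∈ powersetCard (k - 1) univ, ∑ u, ∑ v,
        linkAdj n K F u v * linkCochain f F v * linkCochain f F u
      = ∑ G, ∑ G', upAdj n k K G G' * f G' * f G := by
  rw [sum_congr rfl fun F hF => sum_linkAdj_linkCochain hk (mem_powersetCard.mp hF).2 f, sum_comm]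
  refine sum_congr rfl fun G _ => ?_
  rw [sum_comm]
  refine sum_congr rfl fun G' _ => ?_
  rw [← sum_filter, filter_subset_powersetCard_univ]
  by_cases hGG' : G.1 = G'.1
  · simp [upAdj, hGG']
  by_cases hcard : (G.1 ∩ G'.1).card = k - 1
  · rw [← hcard, powersetCard_self, sum_singleton]
    simp [upAdj, hGG', hcard]
  · have := card_inter_lt_of_ne G.2.1 G'.2.1 hGG'
    rw [powersetCard_eq_empty.mpr (by omega), sum_empty]
    simp [upAdj, hcard]

end Garland

theorem stmt12_general (n k : ℕ) (hk : 2 ≤ k)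
    (K : Finset (Finset (Fin n)))
    (deg : Finset (Fin n) → ℕ) (hdeg : ∀ G, deg G = (K.filter (fun H => G ⊆ H)).card)
    (A Δ : Matrix (Faces n k K) (Faces n k K) ℝ)
    (hA : ∀ G G', A G G' = if G.1 ≠ G'.1 ∧ (G.1 ∩ G'.1).card = k - 1 ∧ G.1 ∪ G'.1 ∈ K
        then ((incSign G.1 (G.1 ∩ G'.1) * incSign G'.1 (G.1 ∩ G'.1) : ℤ) : ℝ) else 0)
    (hΔ : Δ = 1 - Matrix.diagonal (fun G => ((deg G.1 : ℝ))⁻¹) * A)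
    (Alk Δlk : ∀ F : Finset (Fin n), Matrix (LinkVerts n K F) (LinkVerts n K F) ℝ)
    (hAlk : ∀ F (u v : LinkVerts n K F), Alk F u v =
        if u ≠ v ∧ insert u.1 (insert v.1 F) ∈ K then (1 : ℝ) else 0)
    (hΔlk : ∀ F, Δlk F =
        1 - Matrix.diagonal (fun u : LinkVerts n K F => ((deg (insert u.1 F) : ℝ))⁻¹) * Alk F)
    (lamMin lamMax : ℝ)
    (hlink : ∀ F : Finset (Fin n), F.card = k - 1 →
      ∀ w : LinkVerts n K F → ℝ,
        (∑ u, (deg (insert u.1 F) : ℝ) * w u = 0) →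
        lamMin * (∑ u, (deg (insert u.1 F) : ℝ) * w u ^ 2)
            ≤ ∑ u, (deg (insert u.1 F) : ℝ) * ((Δlk F).mulVec w) u * w u ∧
        ∑ u, (deg (insert u.1 F) : ℝ) * ((Δlk F).mulVec w) u * w u
            ≤ lamMax * (∑ u, (deg (insert u.1 F) : ℝ) * w u ^ 2)) :
    ∀ f : Faces n k K → ℝ,
      (∀ F' : Finset (Fin n), F'.card = k - 1 →
        ∑ G : Faces n k K, (deg G.1 : ℝ) * f G * (incSign G.1 F' : ℝ) = 0) →
      (1 + k * lamMin - k) * (∑ G, (deg G.1 : ℝ) * f G ^ 2)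
          ≤ ∑ G, (deg G.1 : ℝ) * (Δ.mulVec f) G * f G ∧
      ∑ G, (deg G.1 : ℝ) * (Δ.mulVec f) G * f G
          ≤ (1 + k * lamMax - k) * (∑ G, (deg G.1 : ℝ) * f G ^ 2) := by
  intro f hf
  have hk : 1 ≤ k := one_le_two.trans hk
  obtain rfl : A = upAdj n k K := Matrix.ext hA
  obtain rfl : Alk = linkAdj n K := funext fun F => Matrix.ext (hAlk F)
  have hdeg_ne : ∀ G : Finset (Fin n), (∃ H ∈ K, G ⊆ H) → (deg G : ℝ) ≠ 0 := by
    rintro G ⟨H, hH, hGH⟩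
    rw [hdeg, Nat.cast_ne_zero, ← pos_iff_ne_zero, card_pos]
    exact ⟨H, mem_filter.mpr ⟨hH, hGH⟩⟩
  let N F := ∑ u : LinkVerts n K F, (deg (insert u.1 F) : ℝ) * linkCochain f F u ^ 2
  let T F := ∑ u, ∑ v, linkAdj n K F u v * linkCochain f F v * linkCochain f F u
  have hlocal : ∀ F ∈ powersetCard (k - 1) univ,
      lamMin * N F ≤ N F - T F ∧ N F - T F ≤ lamMax * N F := by
    intro F hF
    replace hF := (mem_powersetCard.mp hF).2
    have horth := (sum_mul_linkCochain hk hF (fun G => (deg G : ℝ)) f).trans (hf F hF)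
    rw [← quadForm_one_sub_diagonal_inv_mul _ (fun u => hdeg_ne _ u.2.2), ← hΔlk F]
    exact hlink F hF _ horth
  have hN : ∑ F ∈ powersetCard (k - 1) univ, N F = k * ∑ G, (deg G.1 : ℝ) * f G ^ 2 :=
    sum_sum_mul_linkCochain_sq hk (fun G => (deg G : ℝ)) f
  have hT : ∑ F ∈ powersetCard (k - 1) univ, T F = ∑ G, ∑ G', upAdj n k K G G' * f G' * f G :=
    sum_sum_linkAdj_linkCochain hk f
  have hlo := sum_le_sum fun F hF => (hlocal F hF).1
  have hhi := sum_le_sum fun F hF => (hlocal F hF).2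
  rw [← mul_sum, sum_sub_distrib, hN, hT] at hlo hhi
  rw [hΔ, quadForm_one_sub_diagonal_inv_mul _ fun G => hdeg_ne _ G.2.2]
  constructor <;> linarith

/-- Garland's estimate: let `X` be a pure `k`-dimensional complex (with `k`-faces `K`).
If for every `(k−2)`-face `F` all nontrivial eigenvalues of the normalized Laplacian
`Δ(lk F)` of the link graph lie in `[λ_min, λ_max]` (expressed via the degree-weighted
quadratic form on vectors orthogonal to the all-ones vector), then for every `f` in the
degree-weighted orthogonal complement of `B^{k−1}(X;ℝ)`,
`(1 + kλ_min − k)⟨f,f⟩ ≤ ⟨Δ^up_{k−1} f, f⟩ ≤ (1 + kλ_max − k)⟨f,f⟩`. -/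
theorem stmt12 (n k : ℕ) (hk : 2 ≤ k)
    (K : Finset (Finset (Fin n))) (hK : ∀ H ∈ K, H.card = k + 1)
    (deg : Finset (Fin n) → ℕ) (hdeg : ∀ G, deg G = (K.filter (fun H => G ⊆ H)).card)
    (A Δ : Matrix (Faces n k K) (Faces n k K) ℝ)
    (hA : ∀ G G', A G G' = if G.1 ≠ G'.1 ∧ (G.1 ∩ G'.1).card = k - 1 ∧ G.1 ∪ G'.1 ∈ K
        then ((incSign G.1 (G.1 ∩ G'.1) * incSign G'.1 (G.1 ∩ G'.1) : ℤ) : ℝ) else 0)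
    (hΔ : Δ = 1 - Matrix.diagonal (fun G => ((deg G.1 : ℝ))⁻¹) * A)
    (Alk Δlk : ∀ F : Finset (Fin n), Matrix (LinkVerts n K F) (LinkVerts n K F) ℝ)
    (hAlk : ∀ F (u v : LinkVerts n K F), Alk F u v =
        if u ≠ v ∧ insert u.1 (insert v.1 F) ∈ K then (1 : ℝ) else 0)
    (hΔlk : ∀ F, Δlk F =
        1 - Matrix.diagonal (fun u : LinkVerts n K F => ((deg (insert u.1 F) : ℝ))⁻¹) * Alk F)
    (lamMin lamMax : ℝ)
    (hlink : ∀ F : Finset (Fin n), F.card = k - 1 →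
      ∀ w : LinkVerts n K F → ℝ,
        (∑ u, (deg (insert u.1 F) : ℝ) * w u = 0) →
        lamMin * (∑ u, (deg (insert u.1 F) : ℝ) * w u ^ 2)
            ≤ ∑ u, (deg (insert u.1 F) : ℝ) * ((Δlk F).mulVec w) u * w u ∧
        ∑ u, (deg (insert u.1 F) : ℝ) * ((Δlk F).mulVec w) u * w u
            ≤ lamMax * (∑ u, (deg (insert u.1 F) : ℝ) * w u ^ 2)) :
    ∀ f : Faces n k K → ℝ,
      (∀ F' : Finset (Fin n), F'.card = k - 1 →
        ∑ G : Faces n k K, (deg G.1 : ℝ) * f G * (incSign G.1 F' : ℝ) = 0) →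
      (1 + k * lamMin - k) * (∑ G, (deg G.1 : ℝ) * f G ^ 2)
          ≤ ∑ G, (deg G.1 : ℝ) * (Δ.mulVec f) G * f G ∧
      ∑ G, (deg G.1 : ℝ) * (Δ.mulVec f) G * f G
          ≤ (1 + k * lamMax - k) * (∑ G, (deg G.1 : ℝ) * f G ^ 2) :=
  stmt12_general n k hk K deg hdeg A Δ hA hΔ Alk Δlk hAlk hΔlk lamMin lamMax hlink
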